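/- Let Γ be a good pointclass such that every subset of [ℕ]^ω belonging to Γ has the Ramsey property. Then no Vitali set belongs to Γ. -/

import Mathlib

open Set

open Classical in
/-- The characteristic function of a set, viewed as a point of the Cantor space `α → Bool`. -/
noncomputable def chi {α : Type} (s : Set α) : α → Bool :=
  fun a => if a ∈ s then true else false
/-- A *good pointclass*: a collection of subsets of Polish spaces containing all clopen
sets and closed under countable intersections, countable unions, finite products,
continuous images, and continuous preimages. -/
structure GoodPointclass : Type 1 where
  mem : ∀ (X : Type) [TopologicalSpace X], Set (Set X)
  clopen_mem : ∀ (X : Type) [TopologicalSpace X] [PolishSpace X] (s : Set X),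
    IsClopen s → s ∈ mem X
  iInter_mem : ∀ (X : Type) [TopologicalSpace X] [PolishSpace X] (s : ℕ → Set X),
    (∀ n, s n ∈ mem X) → (⋂ n, s n) ∈ mem X
  iUnion_mem : ∀ (X : Type) [TopologicalSpace X] [PolishSpace X] (s : ℕ → Set X),
    (∀ n, s n ∈ mem X) → (⋃ n, s n) ∈ mem X
  prod_mem : ∀ (X Y : Type) [TopologicalSpace X] [PolishSpace X]
    [TopologicalSpace Y] [PolishSpace Y] (s : Set X) (t : Set Y),
    s ∈ mem X → t ∈ mem Y → s ×ˢ t ∈ mem (X × Y)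
  image_mem : ∀ (X Y : Type) [TopologicalSpace X] [PolishSpace X]
    [TopologicalSpace Y] [PolishSpace Y] (f : X → Y) (s : Set X),
    Continuous f → s ∈ mem X → f '' s ∈ mem Y
  preimage_mem : ∀ (X Y : Type) [TopologicalSpace X] [PolishSpace X]
    [TopologicalSpace Y] [PolishSpace Y] (f : X → Y) (t : Set Y),
    Continuous f → t ∈ mem Y → f ⁻¹' t ∈ mem X
/-- A set `X ⊆ [ℕ]^ω` has the Ramsey property: there is an infinite `H ⊆ ℕ` with
`[H]^ω ⊆ X` or `[H]^ω ∩ X = ∅`. -/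
def RamseyProp (X : Set (Set ℕ)) : Prop :=
  ∃ H : Set ℕ, H.Infinite ∧
    ((∀ y : Set ℕ, y.Infinite → y ⊆ H → y ∈ X) ∨
     (∀ y : Set ℕ, y.Infinite → y ⊆ H → y ∉ X))
/-- A Vitali set: `V ⊆ ℝ` such that every real differs from a unique element
of `V` by a rational. -/
def IsVitali (V : Set ℝ) : Prop :=
  ∀ x : ℝ, ∃! v, v ∈ V ∧ ∃ q : ℚ, x - v = (q : ℝ)


/-!
Send `A ⊆ ℕ` to `f A = ∑_{n ∈ A} 3⁻ⁿ`, so that removing `k ∈ A` lowers `f A` by the rational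
`3⁻ᵏ`. Reduction mod 2 is a homomorphism on the rationals with odd denominator and sends every
`3⁻ᵏ` to `1`; extending it along coset representatives of this subgroup gives `S ⊆ ℚ` with
`q + 3⁻ᵏ ∈ S ↔ q ∉ S`. For a Vitali set `V`, whether the rational `q` with `f A - q ∈ V` lies
in `S` therefore flips whenever one element is removed from `A`, so the infinite `A` for which it
does form a set without the Ramsey property; the closure properties of `Γ` put this set in `Γ`.
-/

open Pointwise

instance : PolishSpace (ℕ → Bool) :=
  instPolishSpaceOfSeparableSpaceOfIsCompletelyMetrizableSpace

namespace GoodPointclass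

variable (Γ : GoodPointclass) {X : Type} [TopologicalSpace X] [PolishSpace X]

theorem iUnion_mem_of_countable {ι : Sort*} [Countable ι] {s : ι → Set X}
    (hs : ∀ i, s i ∈ Γ.mem X) : (⋃ i, s i) ∈ Γ.mem X := by
  cases isEmpty_or_nonempty ι
  · simpa using Γ.clopen_mem X ∅ isClopen_empty
  · obtain ⟨e, he⟩ := exists_surjective_nat ι
    rw [← he.iUnion_comp]
    exact Γ.iUnion_mem X _ fun n => hs (e n)

theorem iInter_mem_of_countable {ι : Sort*} [Countable ι] {s : ι → Set X}
    (hs : ∀ i, s i ∈ Γ.mem X) : (⋂ i, s i) ∈ Γ.mem X := by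
  cases isEmpty_or_nonempty ι
  · simpa using Γ.clopen_mem X univ isClopen_univ
  · obtain ⟨e, he⟩ := exists_surjective_nat ι
    rw [← he.iInter_comp]
    exact Γ.iInter_mem X _ fun n => hs (e n)

theorem inter_mem {s t : Set X} (hs : s ∈ Γ.mem X) (ht : t ∈ Γ.mem X) :
    s ∩ t ∈ Γ.mem X := by
  rw [inter_eq_iInter]
  exact Γ.iInter_mem_of_countable fun b => by cases b <;> assumption

theorem setOf_infinite_mem : {x : ℕ → Bool | {n | x n}.Infinite} ∈ Γ.mem (ℕ → Bool) := by
  have h : {x : ℕ → Bool | {n | x n}.Infinite} = ⋂ N : ℕ, ⋃ n > N, {x | x n} := by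
    ext x
    simp [infinite_iff_exists_gt, and_comm]
  rw [h]
  refine Γ.iInter_mem _ _ fun N => Γ.iUnion_mem_of_countable fun n =>
    Γ.iUnion_mem_of_countable fun _ => Γ.clopen_mem _ _ ?_
  exact (isClopen_discrete {true}).preimage (continuous_apply n)

theorem add_image_rat_mem {V : Set ℝ} (hV : V ∈ Γ.mem ℝ) (S : Set ℚ) :
    V + ((↑) '' S : Set ℝ) ∈ Γ.mem ℝ := by
  rw [← iUnion_add_right_image, biUnion_image, biUnion_eq_iUnion]
  exact Γ.iUnion_mem_of_countable fun q => Γ.image_mem _ _ _ _ (continuous_add_const _) hV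

end GoodPointclass

theorem AddSubgroup.exists_add_eq_add_of_addMonoidHom {G M : Type*} [AddGroup G]
    [AddZeroClass M] (H : AddSubgroup G) (ψ : H →+ M) :
    ∃ c : G → M, ∀ (g : G) (h : H), c (g + h) = c g + ψ h := by
  let rep : G → G := fun g => (QuotientAddGroup.mk (s := H) g).out
  have hrep : ∀ g, -rep g + g ∈ H := fun g =>
    QuotientAddGroup.eq.mp (QuotientAddGroup.out_eq' (QuotientAddGroup.mk (s := H) g))
  refine ⟨fun g => ψ ⟨-rep g + g, hrep g⟩, fun g h => ?_⟩
  have hcoset : rep (g + h) = rep g :=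
    congrArg Quotient.out (QuotientAddGroup.eq.mpr (by simp))
  simp only [hcoset, ← map_add]
  congr 1
  ext
  simp [add_assoc]

namespace Rat

def oddDenAddSubgroup : AddSubgroup ℚ where
  carrier := {q | Odd q.den}
  zero_mem' := by simp
  add_mem' hq hr := (Nat.odd_mul.mpr ⟨hq, hr⟩).of_dvd_nat (add_den_dvd _ _)
  neg_mem' hq := by simpa using hq

/-- `(q : ZMod 2)` is `q.num / q.den`, which is additive only where `q.den` is invertible. -/
def castZModTwo : oddDenAddSubgroup →+ ZMod 2 where
  toFun q := ((q : ℚ) : ZMod 2)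
  map_zero' := by simp
  map_add' q r := by
    have hden : ∀ q : oddDenAddSubgroup, ((q : ℚ).den : ZMod 2) ≠ 0 := fun q => by
      rw [Ne, ZMod.natCast_eq_zero_iff_even, Nat.not_even_iff_odd]
      exact q.2
    exact cast_add_of_ne_zero (hden q) (hden r)

theorem inv_three_pow_mem_oddDenAddSubgroup (k : ℕ) : (3 : ℚ)⁻¹ ^ k ∈ oddDenAddSubgroup := by
  show Odd ((3 : ℚ)⁻¹ ^ k).den
  rw [inv_pow, show (3 : ℚ) ^ k = ((3 ^ k : ℕ) : ℚ) by push_cast; rfl, inv_natCast_den]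
  simp [Odd.pow (by decide : Odd 3)]

theorem castZModTwo_inv_three_pow (k : ℕ) :
    castZModTwo ⟨_, inv_three_pow_mem_oddDenAddSubgroup k⟩ = 1 := by
  show (((3 : ℚ)⁻¹ ^ k : ℚ) : ZMod 2) = 1
  rw [cast_pow, show (3 : ℚ)⁻¹ = ((3 : ℕ) : ℚ)⁻¹ by norm_num, cast_inv_nat,
    show ((3 : ℕ) : ZMod 2) = 1 from rfl, inv_one, one_pow]

end Rat

theorem exists_rat_set_add_inv_three_pow_mem_iff :
    ∃ S : Set ℚ, ∀ (q : ℚ) (k : ℕ), q + (3 : ℚ)⁻¹ ^ k ∈ S ↔ q ∉ S := by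
  obtain ⟨c, hc⟩ := Rat.oddDenAddSubgroup.exists_add_eq_add_of_addMonoidHom Rat.castZModTwo
  refine ⟨{q | c q = 1}, fun q k => ?_⟩
  have hstep := hc q ⟨_, Rat.inv_three_pow_mem_oddDenAddSubgroup k⟩
  rw [Rat.castZModTwo_inv_three_pow] at hstep
  simp only [mem_ofPred_eq, hstep]
  exact (by decide : ∀ z : ZMod 2, z + 1 = 1 ↔ ¬z = 1) (c q)

theorem chi_eq_true {α : Type} {s : Set α} {a : α} : chi s a = true ↔ a ∈ s := by
  by_cases h : a ∈ s <;> simp [chi, h]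

theorem setOf_chi_eq_true {α : Type} (s : Set α) : {a | chi s a = true} = s :=
  ext fun _ => chi_eq_true

theorem chi_surjective (α : Type) : Function.Surjective (chi (α := α)) :=
  fun x => ⟨{a | x a}, funext fun a => by cases h : x a <;> simp [chi, h]⟩

noncomputable def boolSeries (w : ℕ → ℝ) (x : ℕ → Bool) : ℝ :=
  ∑' n, if x n then w n else 0

theorem continuous_boolSeries {w : ℕ → ℝ} (hw : Summable fun n => ‖w n‖) :
    Continuous (boolSeries w) := by
  refine continuous_tsum (fun n => ?_) hw fun n x => ?_
  · exact (continuous_of_discreteTopology (f := fun b : Bool => if b then w n else 0)).comp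
      (continuous_apply n)
  · split_ifs <;> simp

theorem boolSeries_chi (w : ℕ → ℝ) (A : Set ℕ) :
    boolSeries w (chi A) = ∑' n, A.indicator w n := by
  unfold boolSeries
  congr 1 with n
  by_cases h : n ∈ A <;> simp [chi_eq_true, h]

theorem boolSeries_chi_of_mem {w : ℕ → ℝ} (hw : Summable w) {A : Set ℕ} {k : ℕ} (hk : k ∈ A) :
    boolSeries w (chi A) = boolSeries w (chi (A \ {k})) + w k := by
  have hA : A.indicator w = fun n => (A \ {k}).indicator w n + ({k} : Set ℕ).indicator w n := by
    rw [← indicator_union_of_disjoint disjoint_sdiff_left,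
      sdiff_union_of_subset (singleton_subset_iff.mpr hk)]
  rw [boolSeries_chi, boolSeries_chi, hA, (hw.indicator _).tsum_add (hw.indicator _),
    indicator_singleton, tsum_pi_single]

theorem Set.mem_add_image_iff {G β : Type*} [AddCommGroup G] {s : Set G} {t : Set β}
    {f : β → G} {y : G} : y ∈ s + f '' t ↔ ∃ b ∈ t, y - f b ∈ s := by
  simp only [mem_add, mem_image]
  constructor
  · rintro ⟨a, ha, _, ⟨b, hb, rfl⟩, rfl⟩
    exact ⟨b, hb, by simpa using ha⟩
  · rintro ⟨b, hb, hs⟩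
    exact ⟨_, hs, f b, ⟨b, hb, rfl⟩, sub_add_cancel y (f b)⟩

namespace IsVitali

variable {V : Set ℝ}

theorem exists_sub_rat_mem (hV : IsVitali V) (x : ℝ) : ∃ q : ℚ, x - q ∈ V := by
  obtain ⟨v, ⟨hv, q, hq⟩, -⟩ := hV x
  exact ⟨q, by rwa [← hq, sub_sub_cancel]⟩

theorem rat_eq_of_sub_mem (hV : IsVitali V) {x : ℝ} {q q' : ℚ} (hq : x - q ∈ V)
    (hq' : x - q' ∈ V) : q = q' := by
  obtain ⟨v, -, hv⟩ := hV x
  have := (hv _ ⟨hq, q, by ring⟩).trans (hv _ ⟨hq', q', by ring⟩).symm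
  exact_mod_cast sub_right_injective this

theorem add_mem_add_iff (hV : IsVitali V) {S : Set ℚ} {r : ℚ} (hS : ∀ q, q + r ∈ S ↔ q ∉ S)
    (x : ℝ) :
    x + r ∈ V + ((↑) '' S : Set ℝ) ↔ x ∉ V + ((↑) '' S : Set ℝ) := by
  obtain ⟨q₀, hx⟩ := hV.exists_sub_rat_mem x
  have hxr : x + r - ((q₀ + r : ℚ) : ℝ) ∈ V := by push_cast; simpa using hx
  simp only [mem_add_image_iff]
  constructor
  · rintro ⟨q, hq, hqV⟩ ⟨q', hq', hq'V⟩
    rw [hV.rat_eq_of_sub_mem hqV hxr] at hq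
    rw [hV.rat_eq_of_sub_mem hq'V hx] at hq'
    exact (hS q₀).mp hq hq'
  · intro hnot
    exact ⟨q₀ + r, (hS q₀).mpr fun h => hnot ⟨q₀, h, hx⟩, hxr⟩

end IsVitali

theorem not_ramseyProp_of_mem_iff_diff_singleton_notMem {X : Set (Set ℕ)}
    (hX : ∀ A : Set ℕ, A.Infinite → ∀ k ∈ A, A ∈ X ↔ A \ {k} ∉ X) : ¬ RamseyProp X := by
  rintro ⟨H, hH, hin | hout⟩ <;> obtain ⟨k, hk⟩ := hH.nonempty
  · exact (hX H hH k hk).mp (hin H hH subset_rfl)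
      (hin _ (hH.sdiff (finite_singleton k)) sdiff_subset)
  · exact hout H hH subset_rfl
      ((hX H hH k hk).mpr (hout _ (hH.sdiff (finite_singleton k)) sdiff_subset))

theorem no_vitali_set_in_ramsey_pointclass (Γ : GoodPointclass)
    (hRamsey : ∀ X : Set (Set ℕ), (∀ x ∈ X, x.Infinite) →
      chi '' X ∈ Γ.mem (ℕ → Bool) → RamseyProp X) :
    ∀ V : Set ℝ, IsVitali V → V ∉ Γ.mem ℝ := by
  intro V hV hVΓ
  obtain ⟨S, hS⟩ := exists_rat_set_add_inv_three_pow_mem_iff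
  have hw : Summable fun n => (3 : ℝ)⁻¹ ^ n :=
    summable_geometric_of_lt_one (by norm_num) (by norm_num)
  set f := boolSeries fun n => (3 : ℝ)⁻¹ ^ n
  set Y := {x : ℕ → Bool | {n | x n}.Infinite} ∩ f ⁻¹' (V + ((↑) '' S : Set ℝ))
  have hYΓ : Y ∈ Γ.mem (ℕ → Bool) :=
    Γ.inter_mem Γ.setOf_infinite_mem (Γ.preimage_mem _ _ _ _
      (continuous_boolSeries (by simpa using hw)) (Γ.add_image_rat_mem hVΓ S))
  refine not_ramseyProp_of_mem_iff_diff_singleton_notMem (fun A hA k hk => ?_) <|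
    hRamsey (chi ⁻¹' Y) (fun A hA => by simpa [Y, setOf_chi_eq_true] using hA.1)
      (by rwa [image_preimage_eq _ (chi_surjective ℕ)])
  have hflip := hV.add_mem_add_iff (hS · k) (f (chi (A \ {k})))
  push_cast at hflip
  simp only [Y, mem_preimage, mem_inter_iff, mem_ofPred_eq, setOf_chi_eq_true, hA,
    hA.sdiff (finite_singleton k), true_and, f, boolSeries_chi_of_mem hw hk, hflip]
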